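/- arXiv:2412.00587 — 4 statements merged into one kernel-verified Lean document; each statement's English description precedes it below -/
import Mathlib

section
/- Let E be a Polish space with Borel σ-algebra 𝓔, and let Q_n, Q be Markov kernels on E such that for every x ∈ E, sup_{B ∈ 𝓔} |Q_n(x,B) − Q(x,B)| → 0 as n → ∞. Assume there are Δ ∈ [0,1) and Borel probability measures π_n, π on E such that for all positive integers k, all n and all x ∈ E: sup_{B ∈ 𝓔} |(Q_n)^k(x,B) − π_n(B)| ≤ Δ^k and sup_{B ∈ 𝓔} |Q^k(x,B) − π(B)| ≤ Δ^k. Then sup_{B ∈ 𝓔} |π_n(B) − π(B)| → 0 as n → ∞. -/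
open MeasureTheory ProbabilityTheory Filter
open scoped ENNReal

/-- Total variation distance `sup_{B ∈ 𝓔} |μ(B) − ν(B)|`. -/
noncomputable def tvDist {E : Type*} [MeasurableSpace E] (μ ν : Measure E) : ℝ :=
  ⨆ B : {B : Set E // MeasurableSet B}, |(μ B.1).toReal - (ν B.1).toReal|

/-- `k`-th iterate of a kernel: `Q^0 = id`, `Q^{k+1}(x,B) = ∫ Q^k(y,B) Q(x,dy)`. -/
noncomputable def kIter {E : Type*} [MeasurableSpace E] (Q : Kernel E E) : ℕ → Kernel E E
  | 0 => Kernel.id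
  | k + 1 => (kIter Q k) ∘ₖ Q

/-!
Through any single point `x`, the triangle inequality gives
`‖π_n - π‖ ≤ 2 Δ^k + ‖Q_n^k(x,·) - Q^k(x,·)‖` for every `k ≥ 1`, so it suffices that
`Q_n^k(x,·) → Q^k(x,·)` in total variation for fixed `k` and `x`. This follows by induction on `k`
from `‖Q_n^{k+1}(x,·) - Q^{k+1}(x,·)‖ ≤ ‖Q_n(x,·) - Q(x,·)‖ + ∫ ‖Q_n^k(y,·) - Q^k(y,·)‖ Q(x,dy)`
and dominated convergence. Taking that integral as a lower Lebesgue integral `∫⁻` avoids any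
measurability question for `y ↦ ‖Q_n^k(y,·) - Q^k(y,·)‖`: dominated convergence still applies to
measurable minorants with the same integral.
-/

section tvDist

variable {E : Type*} [MeasurableSpace E] {μ ν ρ : Measure E}

lemma tvDist_le {c : ℝ} (h : ∀ B, MeasurableSet B → |(μ B).toReal - (ν B).toReal| ≤ c) :
    tvDist μ ν ≤ c :=
  ciSup_le fun B => h B.1 B.2

lemma tvDist_comm (μ ν : Measure E) : tvDist μ ν = tvDist ν μ := by
  simp only [tvDist, abs_sub_comm]

variable [IsFiniteMeasure μ] [IsFiniteMeasure ν] [IsFiniteMeasure ρ]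

lemma le_tvDist {B : Set E} (hB : MeasurableSet B) :
    |(μ B).toReal - (ν B).toReal| ≤ tvDist μ ν := by
  refine le_ciSup (f := fun B : {B : Set E // MeasurableSet B} => |(μ B.1).toReal - (ν B.1).toReal|)
    ⟨(μ Set.univ).toReal + (ν Set.univ).toReal, ?_⟩ ⟨B, hB⟩
  rintro _ ⟨B, rfl⟩
  refine (abs_sub _ _).trans ?_
  rw [abs_of_nonneg ENNReal.toReal_nonneg, abs_of_nonneg ENNReal.toReal_nonneg]
  exact add_le_add (measureReal_mono (Set.subset_univ _)) (measureReal_mono (Set.subset_univ _))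

lemma tvDist_nonneg : 0 ≤ tvDist μ ν :=
  (abs_nonneg _).trans (le_tvDist (μ := μ) (ν := ν) MeasurableSet.empty)

lemma tvDist_self : tvDist μ μ = 0 :=
  le_antisymm (tvDist_le fun B _ => by simp) tvDist_nonneg

lemma tvDist_triangle : tvDist μ ρ ≤ tvDist μ ν + tvDist ν ρ :=
  tvDist_le fun _ hB => (abs_sub_le _ _ _).trans (add_le_add (le_tvDist hB) (le_tvDist hB))

lemma measure_le_add_tvDist {B : Set E} (hB : MeasurableSet B) :
    μ B ≤ ν B + ENNReal.ofReal (tvDist μ ν) := by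
  have h := (le_abs_self _).trans (le_tvDist (μ := μ) (ν := ν) hB)
  calc μ B = ENNReal.ofReal (μ B).toReal := (ENNReal.ofReal_toReal (measure_ne_top μ B)).symm
    _ ≤ ENNReal.ofReal ((ν B).toReal + tvDist μ ν) := ENNReal.ofReal_le_ofReal (by linarith)
    _ ≤ ENNReal.ofReal (ν B).toReal + ENNReal.ofReal (tvDist μ ν) := ENNReal.ofReal_add_le
    _ = ν B + ENNReal.ofReal (tvDist μ ν) := by rw [ENNReal.ofReal_toReal (measure_ne_top ν B)]

lemma tvDist_le_toReal_of_le_add {c : ℝ≥0∞} (hc : c ≠ ∞)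
    (h : ∀ B, MeasurableSet B → μ B ≤ ν B + c ∧ ν B ≤ μ B + c) : tvDist μ ν ≤ c.toReal := by
  refine tvDist_le fun B hB => abs_sub_le_iff.2 ⟨?_, ?_⟩
  · have := ENNReal.toReal_mono (by finiteness) (h B hB).1
    rw [ENNReal.toReal_add (measure_ne_top ν B) hc] at this
    linarith
  · have := ENNReal.toReal_mono (by finiteness) (h B hB).2
    rw [ENNReal.toReal_add (measure_ne_top μ B) hc] at this
    linarith

lemma lintegral_le_lintegral_add_tvDist {f : E → ℝ≥0∞} (hf : Measurable f) (hf1 : ∀ x, f x ≤ 1) :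
    ∫⁻ x, f x ∂μ ≤ ∫⁻ x, f x ∂ν + ENNReal.ofReal (tvDist μ ν) := by
  set g : E → ℝ := fun x => (f x).toReal
  have hg : Measurable g := hf.ennreal_toReal
  have hg1 (x : E) : g x ≤ 1 := ENNReal.toReal_le_of_le_ofReal zero_le_one (by simpa using hf1 x)
  have hfg : f = fun x => ENNReal.ofReal (g x) :=
    funext fun x => (ENNReal.ofReal_toReal (ne_top_of_le_ne_top ENNReal.one_ne_top (hf1 x))).symm
  have hg0 (m : Measure E) : 0 ≤ᵐ[m] g := ae_of_all _ fun _ => ENNReal.toReal_nonneg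
  rw [hfg, lintegral_eq_lintegral_meas_lt μ (hg0 μ) hg.aemeasurable,
    lintegral_eq_lintegral_meas_lt ν (hg0 ν) hg.aemeasurable]
  calc ∫⁻ t in Set.Ioi 0, μ {x | t < g x}
      ≤ ∫⁻ t in Set.Ioi 0, (ν {x | t < g x} +
          (Set.Iio 1).indicator (fun _ => ENNReal.ofReal (tvDist μ ν)) t) := by
        refine lintegral_mono fun t => ?_
        by_cases ht : t < 1
        · simpa [ht] using measure_le_add_tvDist (measurableSet_lt measurable_const hg)
        · have : {x | t < g x} = ∅ :=
            Set.eq_empty_of_forall_notMem fun x hx => ht (lt_of_lt_of_le hx (hg1 x))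
          simp [this]
    _ = (∫⁻ t in Set.Ioi 0, ν {x | t < g x}) + ENNReal.ofReal (tvDist μ ν) := by
        rw [lintegral_add_right _ (measurable_const.indicator measurableSet_Iio),
          lintegral_indicator_const measurableSet_Iio, Measure.restrict_apply measurableSet_Iio,
          Set.Iio_inter_Ioi, Real.volume_Ioo]
        simp

end tvDist

lemma tvDist_le_one {E : Type*} [MeasurableSpace E] (μ ν : Measure E)
    [IsProbabilityMeasure μ] [IsProbabilityMeasure ν] : tvDist μ ν ≤ 1 :=
  tvDist_le fun _ _ => abs_sub_le_of_nonneg_of_le ENNReal.toReal_nonneg measureReal_le_one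
    ENNReal.toReal_nonneg measureReal_le_one

lemma tvDist_comp_apply_le {α β γ : Type*} [MeasurableSpace α] [MeasurableSpace β]
    [MeasurableSpace γ] (κ₁ κ₂ : Kernel α β) (η₁ η₂ : Kernel β γ) [IsFiniteKernel κ₁]
    [IsFiniteKernel κ₂] [IsMarkovKernel η₁] [IsMarkovKernel η₂] (a : α) :
    tvDist ((η₁ ∘ₖ κ₁) a) ((η₂ ∘ₖ κ₂) a) ≤
      tvDist (κ₁ a) (κ₂ a) + (∫⁻ b, ENNReal.ofReal (tvDist (η₁ b) (η₂ b)) ∂κ₂ a).toReal := by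
  set I := ∫⁻ b, ENNReal.ofReal (tvDist (η₁ b) (η₂ b)) ∂κ₂ a
  set c := ENNReal.ofReal (tvDist (κ₁ a) (κ₂ a)) with hc
  have hI : I ≠ ∞ := by
    refine ne_top_of_le_ne_top (measure_ne_top (κ₂ a) Set.univ) ?_
    calc I ≤ ∫⁻ _, 1 ∂κ₂ a := lintegral_mono fun b => ENNReal.ofReal_le_one.2 (tvDist_le_one _ _)
      _ = κ₂ a Set.univ := lintegral_one
  have key := tvDist_le_toReal_of_le_add (μ := (η₁ ∘ₖ κ₁) a) (ν := (η₂ ∘ₖ κ₂) a)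
    (c := c + I) (by finiteness) fun B hB => ?_
  · rwa [ENNReal.toReal_add ENNReal.ofReal_ne_top hI, ENNReal.toReal_ofReal tvDist_nonneg] at key
  have hη (η : Kernel β γ) : Measurable fun b => η b B := η.measurable_coe hB
  rw [Kernel.comp_apply' _ _ _ hB, Kernel.comp_apply' _ _ _ hB]
  constructor
  · calc ∫⁻ b, η₁ b B ∂κ₁ a ≤ ∫⁻ b, η₁ b B ∂κ₂ a + c :=
          lintegral_le_lintegral_add_tvDist (hη η₁) fun b => prob_le_one
      _ ≤ ∫⁻ b, (η₂ b B + ENNReal.ofReal (tvDist (η₁ b) (η₂ b))) ∂κ₂ a + c := by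
          gcongr with b
          exact measure_le_add_tvDist hB
      _ = ∫⁻ b, η₂ b B ∂κ₂ a + (c + I) := by
          rw [lintegral_add_left (hη η₂)]
          ring
  · calc ∫⁻ b, η₂ b B ∂κ₂ a ≤ ∫⁻ b, (η₁ b B + ENNReal.ofReal (tvDist (η₁ b) (η₂ b))) ∂κ₂ a := by
          gcongr with b
          rw [tvDist_comm]
          exact measure_le_add_tvDist hB
      _ = ∫⁻ b, η₁ b B ∂κ₂ a + I := lintegral_add_left (hη η₁) _
      _ ≤ ∫⁻ b, η₁ b B ∂κ₁ a + c + I := by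
          gcongr
          rw [hc, tvDist_comm]
          exact lintegral_le_lintegral_add_tvDist (hη η₁) fun b => prob_le_one
      _ = ∫⁻ b, η₁ b B ∂κ₁ a + (c + I) := add_assoc _ _ _

lemma tendsto_lintegral_zero_of_le_const {α : Type*} [MeasurableSpace α] {μ : Measure α}
    [IsFiniteMeasure μ] {f : ℕ → α → ℝ≥0∞} {C : ℝ≥0∞} (hC : C ≠ ∞) (hfC : ∀ n x, f n x ≤ C)
    (hf : ∀ x, Tendsto (fun n => f n x) atTop (nhds 0)) :
    Tendsto (fun n => ∫⁻ x, f n x ∂μ) atTop (nhds 0) := by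
  choose g hg_meas hg_le hg_eq using fun n => exists_measurable_le_lintegral_eq μ (f n)
  simp_rw [hg_eq]
  simpa using tendsto_lintegral_of_dominated_convergence (fun _ => C) hg_meas
    (fun n => ae_of_all _ fun x => (hg_le n x).trans (hfC n x))
    (by simpa using ENNReal.mul_ne_top hC (measure_ne_top μ Set.univ))
    (ae_of_all _ fun x => tendsto_of_tendsto_of_tendsto_of_le_of_le tendsto_const_nhds (hf x)
      (fun _ => zero_le) fun n => hg_le n x)

section kIter

variable {E : Type*} [MeasurableSpace E]

instance isMarkovKernel_kIter (Q : Kernel E E) [IsMarkovKernel Q] (k : ℕ) :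
    IsMarkovKernel (kIter Q k) := by
  induction k with
  | zero => exact inferInstanceAs (IsMarkovKernel Kernel.id)
  | succ k ih => exact inferInstanceAs (IsMarkovKernel (kIter Q k ∘ₖ Q))

lemma tendsto_tvDist_kIter {Qn : ℕ → Kernel E E} {Q : Kernel E E}
    [∀ n, IsMarkovKernel (Qn n)] [IsMarkovKernel Q]
    (htv : ∀ x, Tendsto (fun n => tvDist (Qn n x) (Q x)) atTop (nhds 0)) (k : ℕ) (x : E) :
    Tendsto (fun n => tvDist (kIter (Qn n) k x) (kIter Q k x)) atTop (nhds 0) := by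
  induction k generalizing x with
  | zero => simp only [kIter, tvDist_self, tendsto_const_nhds]
  | succ k ih =>
    have hI : Tendsto (fun n => ∫⁻ y, ENNReal.ofReal (tvDist (kIter (Qn n) k y) (kIter Q k y))
        ∂Q x) atTop (nhds 0) :=
      tendsto_lintegral_zero_of_le_const ENNReal.one_ne_top
        (fun n y => ENNReal.ofReal_le_one.2 (tvDist_le_one _ _))
        fun y => by simpa using ENNReal.tendsto_ofReal (ih y)
    have hbound := (htv x).add (ENNReal.tendsto_toReal ENNReal.zero_ne_top |>.comp hI)
    rw [ENNReal.toReal_zero, add_zero] at hbound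
    exact squeeze_zero (fun _ => tvDist_nonneg) (fun n => tvDist_comp_apply_le (Qn n) Q _ _ x)
      hbound

end kIter

theorem stmt3_general {E : Type*}
    [MeasurableSpace E]
    (Qn : ℕ → Kernel E E) (Q : Kernel E E)
    [∀ n, IsMarkovKernel (Qn n)] [IsMarkovKernel Q]
    (htv : ∀ x, Tendsto (fun n => tvDist (Qn n x) (Q x)) atTop (nhds 0))
    (Δ : ℝ) (hΔ0 : 0 ≤ Δ) (hΔ1 : Δ < 1)
    (πn : ℕ → Measure E) (π : Measure E)
    [∀ n, IsProbabilityMeasure (πn n)] [IsProbabilityMeasure π]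
    (hergn : ∀ k : ℕ, 1 ≤ k → ∀ n : ℕ, ∀ x : E, tvDist (kIter (Qn n) k x) (πn n) ≤ Δ ^ k)
    (herg : ∀ k : ℕ, 1 ≤ k → ∀ x : E, tvDist (kIter Q k x) π ≤ Δ ^ k) :
    Tendsto (fun n => tvDist (πn n) π) atTop (nhds 0) := by
  obtain ⟨x⟩ := nonempty_of_isProbabilityMeasure π
  have hbound (k : ℕ) (hk : 1 ≤ k) (n : ℕ) :
      tvDist (πn n) π ≤ 2 * Δ ^ k + tvDist (kIter (Qn n) k x) (kIter Q k x) := by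
    calc tvDist (πn n) π
        ≤ tvDist (kIter (Qn n) k x) (πn n) +
            (tvDist (kIter (Qn n) k x) (kIter Q k x) + tvDist (kIter Q k x) π) := by
          rw [tvDist_comm _ (πn n)]
          exact tvDist_triangle.trans (add_le_add_right tvDist_triangle _)
      _ ≤ 2 * Δ ^ k + tvDist (kIter (Qn n) k x) (kIter Q k x) := by
          linarith [hergn k hk n x, herg k hk x]
  rw [Metric.tendsto_atTop]
  intro ε hε
  obtain ⟨k, hΔk, hk⟩ : ∃ k, 2 * Δ ^ k < ε / 2 ∧ 1 ≤ k :=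
    ((((tendsto_pow_atTop_nhds_zero_of_lt_one hΔ0 hΔ1).const_mul 2).eventually
      (gt_mem_nhds (by simpa using half_pos hε))).and (eventually_ge_atTop 1)).exists
  obtain ⟨N, hN⟩ := Metric.tendsto_atTop.1 (tendsto_tvDist_kIter htv k x) (ε / 2) (half_pos hε)
  refine ⟨N, fun n hn => ?_⟩
  have hn := hN n hn
  rw [Real.dist_eq, sub_zero, abs_of_nonneg tvDist_nonneg] at hn ⊢
  linarith [hbound k hk n]

/-- if `Q_n(x,·) → Q(x,·)` in total variation pointwise and the kernels are
uniformly ergodic towards `π_n`, `π` with a common rate `Δ^k`, `Δ < 1`, then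
`π_n → π` in total variation. -/
theorem stmt3 {E : Type*} [TopologicalSpace E] [PolishSpace E]
    [MeasurableSpace E] [BorelSpace E]
    (Qn : ℕ → Kernel E E) (Q : Kernel E E)
    [∀ n, IsMarkovKernel (Qn n)] [IsMarkovKernel Q]
    (htv : ∀ x, Tendsto (fun n => tvDist (Qn n x) (Q x)) atTop (nhds 0))
    (Δ : ℝ) (hΔ0 : 0 ≤ Δ) (hΔ1 : Δ < 1)
    (πn : ℕ → Measure E) (π : Measure E)
    [∀ n, IsProbabilityMeasure (πn n)] [IsProbabilityMeasure π]
    (hergn : ∀ k : ℕ, 1 ≤ k → ∀ n : ℕ, ∀ x : E, tvDist (kIter (Qn n) k x) (πn n) ≤ Δ ^ k)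
    (herg : ∀ k : ℕ, 1 ≤ k → ∀ x : E, tvDist (kIter Q k x) π ≤ Δ ^ k) :
    Tendsto (fun n => tvDist (πn n) π) atTop (nhds 0) :=
  stmt3_general Qn Q htv Δ hΔ0 hΔ1 πn π hergn herg
end

section
/- Let E be a Polish space with Borel σ-algebra 𝓔 and let Q be a Markov kernel on E with Doob coefficient Δ := sup_{x,x' ∈ E} sup_{B ∈ 𝓔} |Q(x,B) − Q(x',B)| < 1. Fix a bounded Borel measurable f : E → ℝ and α ∈ ℝ, α ≠ 0, and define the operator Ψ on bounded Borel measurable functions by Ψg(x) = f(x) + (1/α) ln ∫_E e^{α g(y)} Q(x,dy). Then Ψ is a local contraction in the span seminorm: for every M > 0 there exists γ ∈ [0,1) (depending only on α, M and Δ) such that whenever g_1, g_2 are bounded Borel measurable with ‖g_1‖_sp ≤ M and ‖g_2‖_sp ≤ M, one has ‖Ψg_1 − Ψg_2‖_sp ≤ γ ‖g_1 − g_2‖_sp. -/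
open MeasureTheory ProbabilityTheory Filter
open scoped ENNReal

/-- Doob (uniform ergodicity) coefficient of a kernel:
`Δ = sup_{x,x'} sup_B |Q(x,B) − Q(x',B)|`. -/
noncomputable def doobCoeff {E : Type*} [MeasurableSpace E] (Q : Kernel E E) : ℝ :=
  ⨆ p : E × E, tvDist (Q p.1) (Q p.2)

/-- Span seminorm `‖g‖_sp = sup g − inf g`. -/
noncomputable def spanSemi {E : Type*} (g : E → ℝ) : ℝ := (⨆ x, g x) - (⨅ x, g x)

/-- The risk-sensitive operator `Ψg(x) = f(x) + (1/α) ln ∫ e^{α g(y)} Q(x,dy)`. -/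
noncomputable def PsiOp {E : Type*} [MeasurableSpace E] (Q : Kernel E E)
    (f : E → ℝ) (α : ℝ) (g : E → ℝ) : E → ℝ :=
  fun x => f x + (1 / α) * Real.log (∫ y, Real.exp (α * g y) ∂ (Q x))

/-!
Write `u = g₁ - g₂`. Then `Ψg₁(x) - Ψg₂(x) = α⁻¹ log ∫ e^{α u} dμₓ`, where `μₓ` is `Q(x, ·)` tilted
by `e^{α g₂}`. As `α g₂` has span at most `|α| M`, the density of `μₓ` is at least `e^{-|α| M}`,
so Doeblin's coupling bound puts `μₓ` and `μₓ'` within total variation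
`θ = 1 - e^{-|α| M} (1 - Δ) < 1`. Integrating `e^w`, with `w` of span `K`, against two measures at
total variation `θ` changes its logarithm by at most `log (1 - θ + θ eᴷ)`, a convex function of `K`
vanishing at `0` and strictly below `K`; on `K = |α| ‖u‖_sp ∈ [0, 2 |α| M]` it is therefore at most
`γ |α| ‖u‖_sp` for the slope `γ < 1` of its chord over that interval.
-/

open Real Set

section Span

variable {X : Type*}

lemma spanSemi_le_of_forall_sub_le [Nonempty X] {D : X → ℝ} {K : ℝ}
    (h : ∀ x x', D x - D x' ≤ K) : spanSemi D ≤ K := by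
  rw [spanSemi, sub_le_iff_le_add]
  refine ciSup_le fun x => ?_
  rw [add_comm, ← sub_le_iff_le_add]
  exact le_ciInf fun x' => by linarith [h x x']

lemma sub_le_spanSemi {u : X → ℝ} {C : ℝ} (hb : ∀ y, |u y| ≤ C) (y y' : X) :
    u y - u y' ≤ spanSemi u := by
  have h₁ : u y ≤ ⨆ z, u z := le_ciSup ⟨C, by rintro _ ⟨z, rfl⟩; exact (abs_le.1 (hb z)).2⟩ y
  have h₂ : ⨅ z, u z ≤ u y' := ciInf_le ⟨-C, by rintro _ ⟨z, rfl⟩; exact (abs_le.1 (hb z)).1⟩ y'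
  rw [spanSemi]
  linarith

lemma spanSemi_nonneg [Nonempty X] {u : X → ℝ} {C : ℝ} (hb : ∀ y, |u y| ≤ C) :
    0 ≤ spanSemi u := by
  obtain ⟨y⟩ := ‹Nonempty X›
  simpa using sub_le_spanSemi hb y y

lemma spanSemi_sub_le [Nonempty X] {g₁ g₂ : X → ℝ} {C₁ C₂ : ℝ}
    (hb₁ : ∀ y, |g₁ y| ≤ C₁) (hb₂ : ∀ y, |g₂ y| ≤ C₂) :
    spanSemi (fun x => g₁ x - g₂ x) ≤ spanSemi g₁ + spanSemi g₂ :=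
  spanSemi_le_of_forall_sub_le fun x x' => by
    linarith [sub_le_spanSemi hb₁ x x', sub_le_spanSemi hb₂ x' x]

lemma mul_sub_mul_le_abs_mul_spanSemi {u : X → ℝ} {C : ℝ} (hb : ∀ y, |u y| ≤ C) (a : ℝ)
    (y y' : X) : a * u y - a * u y' ≤ |a| * spanSemi u := by
  have h : |u y - u y'| ≤ spanSemi u :=
    abs_sub_le_iff.2 ⟨sub_le_spanSemi hb y y', sub_le_spanSemi hb y' y⟩
  calc a * u y - a * u y' ≤ |a * (u y - u y')| := by rw [← mul_sub]; exact le_abs_self _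
    _ ≤ |a| * spanSemi u := by rw [abs_mul]; gcongr

lemma le_iInf_add_of_forall_sub_le [Nonempty X] {w : X → ℝ} {K : ℝ}
    (h : ∀ y y', w y - w y' ≤ K) (y : X) : w y ≤ (⨅ z, w z) + K := by
  have : w y - K ≤ ⨅ z, w z := le_ciInf fun z => by linarith [h y z]
  linarith

lemma bddBelow_range_of_forall_sub_le {w : X → ℝ} {K : ℝ} (h : ∀ y y', w y - w y' ≤ K) (y₀ : X) :
    BddBelow (range w) :=
  ⟨w y₀ - K, by rintro _ ⟨z, rfl⟩; linarith [h y₀ z]⟩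

end Span

section TotalVariation

variable {E : Type*} [MeasurableSpace E]

lemma abs_measureReal_sub_le_one (μ ν : Measure E) [IsProbabilityMeasure μ]
    [IsProbabilityMeasure ν] (B : Set E) : |μ.real B - ν.real B| ≤ 1 :=
  abs_sub_le_iff.2
    ⟨by linarith [measureReal_nonneg (μ := ν) (s := B), measureReal_le_one (μ := μ) (s := B)],
      by linarith [measureReal_nonneg (μ := μ) (s := B), measureReal_le_one (μ := ν) (s := B)]⟩

lemma abs_measureReal_sub_le_tvDist (μ ν : Measure E) [IsProbabilityMeasure μ]
    [IsProbabilityMeasure ν] {B : Set E} (hB : MeasurableSet B) :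
    |μ.real B - ν.real B| ≤ tvDist μ ν :=
  le_ciSup (f := fun B : {B : Set E // MeasurableSet B} => |(μ B.1).toReal - (ν B.1).toReal|)
    ⟨1, by rintro _ ⟨B', rfl⟩; exact abs_measureReal_sub_le_one μ ν B'.1⟩ ⟨B, hB⟩

lemma tvDist_le_doobCoeff (Q : Kernel E E) [IsMarkovKernel Q] (x x' : E) :
    tvDist (Q x) (Q x') ≤ doobCoeff Q :=
  le_ciSup (f := fun p : E × E => tvDist (Q p.1) (Q p.2))
    ⟨1, by rintro _ ⟨p, rfl⟩; exact ciSup_le fun B => abs_measureReal_sub_le_one _ _ B.1⟩ (x, x')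

lemma doobCoeff_nonneg (Q : Kernel E E) : 0 ≤ doobCoeff Q :=
  Real.iSup_nonneg fun _ => Real.iSup_nonneg fun _ => abs_nonneg _

lemma measureReal_le_add_doobCoeff (Q : Kernel E E) [IsMarkovKernel Q] (x x' : E) {B : Set E}
    (hB : MeasurableSet B) : (Q x).real B ≤ (Q x').real B + doobCoeff Q := by
  linarith [le_abs_self ((Q x).real B - (Q x').real B),
    abs_measureReal_sub_le_tvDist (Q x) (Q x') hB, tvDist_le_doobCoeff Q x x']

/-- Doeblin's bound: `μ B - ν B ≤ 1 - ε (P₁ Bᶜ + P₂ B)` and `P₁ Bᶜ + P₂ B ≥ 1 - Δ`. -/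
lemma measureReal_le_add_of_minorized {P₁ P₂ μ ν : Measure E} [IsProbabilityMeasure P₂]
    [IsProbabilityMeasure μ] {ε Δ : ℝ} (hε : 0 ≤ ε)
    (hμ : ∀ B, MeasurableSet B → ε * P₁.real B ≤ μ.real B)
    (hν : ∀ B, MeasurableSet B → ε * P₂.real B ≤ ν.real B)
    (hP : ∀ B, MeasurableSet B → P₂.real B ≤ P₁.real B + Δ) {B : Set E} (hB : MeasurableSet B) :
    μ.real B ≤ ν.real B + (1 - ε * (1 - Δ)) := by
  have hμc := hμ Bᶜ hB.compl
  have hPc := mul_le_mul_of_nonneg_left (hP Bᶜ hB.compl) hε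
  rw [probReal_compl_eq_one_sub (μ := μ) hB] at hμc
  rw [probReal_compl_eq_one_sub (μ := P₂) hB] at hPc
  nlinarith [hν B hB]

lemma integral_le_integral_add_mul_of_measureReal_le {P₁ P₂ : Measure E} [IsFiniteMeasure P₁]
    [IsFiniteMeasure P₂] {h : E → ℝ} (hm : Measurable h) {R c : ℝ} (hR : 0 ≤ R)
    (h0 : ∀ y, 0 ≤ h y) (hle : ∀ y, h y ≤ R)
    (hP : ∀ B, MeasurableSet B → P₁.real B ≤ P₂.real B + c) :
    ∫ y, h y ∂P₁ ≤ ∫ y, h y ∂P₂ + c * R := by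
  have hint : ∀ (P : Measure E) [IsFiniteMeasure P], Integrable h P := fun P _ =>
    .of_bound hm.aestronglyMeasurable R <| ae_of_all _ fun y => by
      rw [Real.norm_of_nonneg (h0 y)]; exact hle y
  have hlayer : ∀ (P : Measure E) [IsFiniteMeasure P],
      IntegrableOn (fun t => P.real {y | t ≤ h y}) (Ioc 0 R) := fun P _ => by
    refine (AntitoneOn.integrableOn_isCompact isCompact_Icc ?_).mono_set Ioc_subset_Icc_self
    intro s _ t _ hst
    exact measureReal_mono fun y (hy : t ≤ h y) => hst.trans hy
  rw [(hint P₁).integral_eq_integral_Ioc_meas_le (ae_of_all _ h0) (ae_of_all _ hle),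
    (hint P₂).integral_eq_integral_Ioc_meas_le (ae_of_all _ h0) (ae_of_all _ hle)]
  have hconst : IntegrableOn (fun _ => c) (Ioc (0:ℝ) R) := integrableOn_const (by simp)
  calc ∫ t in Ioc 0 R, P₁.real {y | t ≤ h y}
      ≤ ∫ t in Ioc 0 R, (P₂.real {y | t ≤ h y} + c) :=
        setIntegral_mono (hlayer P₁) ((hlayer P₂).add hconst)
          fun t => hP _ (measurableSet_le measurable_const hm)
    _ = (∫ t in Ioc 0 R, P₂.real {y | t ≤ h y}) + c * R := by
        rw [integral_add (hlayer P₂) hconst, setIntegral_const,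
          Real.volume_real_Ioc_of_le hR, smul_eq_mul, sub_zero, mul_comm]

end TotalVariation

section BernoulliCGF

/-- `log (1 - θ + θ eᵗ)`, the cumulant generating function of a Bernoulli(`θ`) variable. -/
noncomputable def bernoulliCGF (θ t : ℝ) : ℝ := log (1 + θ * (exp t - 1))

lemma bernoulliCGF_nonneg {θ t : ℝ} (hθ : 0 ≤ θ) (ht : 0 ≤ t) : 0 ≤ bernoulliCGF θ t :=
  log_nonneg <| le_add_of_nonneg_right <| mul_nonneg hθ <| by linarith [one_le_exp ht]

lemma bernoulliCGF_lt_self {θ T : ℝ} (hθ₀ : 0 ≤ θ) (hθ₁ : θ < 1) (hT : 0 < T) :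
    bernoulliCGF θ T < T := by
  have hexp : 1 < exp T := one_lt_exp_iff.2 hT
  have hlt : 1 + θ * (exp T - 1) < exp T := by nlinarith
  calc bernoulliCGF θ T < log (exp T) := log_lt_log (by nlinarith) hlt
    _ = T := log_exp T

/-- Convexity of `bernoulliCGF θ` between `0` and `T`, via the concavity of `x ↦ x ^ (t / T)`. -/
lemma bernoulliCGF_le_div_mul {θ t T : ℝ} (hθ₀ : 0 ≤ θ) (hθ₁ : θ ≤ 1) (ht : 0 ≤ t) (htT : t ≤ T)
    (hT : 0 < T) : bernoulliCGF θ t ≤ t / T * bernoulliCGF θ T := by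
  set p := t / T
  have hp₀ : 0 ≤ p := div_nonneg ht hT.le
  have hp₁ : p ≤ 1 := (div_le_one hT).2 htT
  have hjensen := (concaveOn_rpow hp₀ hp₁).2 (mem_Ici.2 zero_le_one) (mem_Ici.2 (exp_pos T).le)
    (sub_nonneg.2 hθ₁) hθ₀ (sub_add_cancel 1 θ)
  have hexp : exp T ^ p = exp t := by rw [← exp_mul, mul_div_cancel₀ t hT.ne']
  simp only [one_rpow, smul_eq_mul, mul_one, hexp] at hjensen
  have hpos : 0 < 1 - θ + θ * exp T := by nlinarith [one_le_exp hT.le]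
  calc bernoulliCGF θ t = log (1 - θ + θ * exp t) := by rw [bernoulliCGF]; ring_nf
    _ ≤ log ((1 - θ + θ * exp T) ^ p) :=
        log_le_log (by nlinarith [one_le_exp ht]) hjensen
    _ = p * bernoulliCGF θ T := by rw [log_rpow hpos, bernoulliCGF]; ring_nf

end BernoulliCGF

section Tilted

variable {E : Type*} [MeasurableSpace E]

lemma integrable_exp_of_forall_sub_le {P : Measure E} [IsFiniteMeasure P] {φ : E → ℝ}
    (hφ : Measurable φ) {K : ℝ} (hK : ∀ y y', φ y - φ y' ≤ K) (y₀ : E) :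
    Integrable (fun y => exp (φ y)) P :=
  .of_bound hφ.exp.aestronglyMeasurable (exp (φ y₀ + K)) <| ae_of_all _ fun y => by
    rw [norm_of_nonneg (exp_pos _).le]
    exact exp_le_exp.2 (by linarith [hK y y₀])

lemma exp_neg_mul_measureReal_le_tilted {P : Measure E} [IsProbabilityMeasure P] {φ : E → ℝ}
    (hφ : Measurable φ) {K : ℝ} (hK : ∀ y y', φ y - φ y' ≤ K) {B : Set E}
    (hB : MeasurableSet B) : exp (-K) * P.real B ≤ (P.tilted φ).real B := by
  obtain ⟨y₀⟩ := nonempty_of_isProbabilityMeasure P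
  have hint := integrable_exp_of_forall_sub_le (P := P) hφ hK y₀
  have hZ : 0 < ∫ y, exp (φ y) ∂P := integral_exp_pos hint
  have hdensity : ∀ y, exp (-K) ≤ exp (φ y) / ∫ y, exp (φ y) ∂P := fun y => by
    have : ∫ y', exp (φ y') ∂P ≤ exp (φ y + K) := by
      simpa using integral_mono hint (integrable_const (exp (φ y + K)))
        fun y' => exp_le_exp.2 (by linarith [hK y' y])
    rw [le_div_iff₀ hZ]
    calc exp (-K) * ∫ y', exp (φ y') ∂P ≤ exp (-K) * exp (φ y + K) := by gcongr
      _ = exp (φ y) := by rw [← exp_add]; ring_nf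
  rw [measureReal_def (μ := P.tilted φ), tilted_apply_eq_ofReal_integral' _ hB,
    ENNReal.toReal_ofReal (setIntegral_nonneg hB fun y _ => by positivity)]
  calc exp (-K) * P.real B = ∫ _ in B, exp (-K) ∂P := by
        rw [setIntegral_const, smul_eq_mul, mul_comm]
    _ ≤ ∫ y in B, exp (φ y) / ∫ y, exp (φ y) ∂P ∂P :=
        setIntegral_mono_on integrableOn_const (hint.div_const _).integrableOn hB
          fun y _ => hdensity y

lemma tilted_measureReal_le_add (Q : Kernel E E) [IsMarkovKernel Q] {φ : E → ℝ}
    (hφ : Measurable φ) {K : ℝ} (hK : ∀ y y', φ y - φ y' ≤ K) (x x' : E) {B : Set E}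
    (hB : MeasurableSet B) :
    ((Q x).tilted φ).real B ≤ ((Q x').tilted φ).real B + (1 - exp (-K) * (1 - doobCoeff Q)) := by
  have := isProbabilityMeasure_tilted (μ := Q x) (integrable_exp_of_forall_sub_le hφ hK x)
  exact measureReal_le_add_of_minorized (exp_pos _).le
    (fun _ hB => exp_neg_mul_measureReal_le_tilted hφ hK hB)
    (fun _ hB => exp_neg_mul_measureReal_le_tilted hφ hK hB)
    (fun _ hB => measureReal_le_add_doobCoeff Q x' x hB) hB

lemma log_integral_exp_sub_le {P₁ P₂ : Measure E} [IsProbabilityMeasure P₁]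
    [IsProbabilityMeasure P₂] {w : E → ℝ} (hw : Measurable w) {m K θ : ℝ} (hK : 0 ≤ K)
    (hlo : ∀ y, m ≤ w y) (hhi : ∀ y, w y ≤ m + K)
    (hP : ∀ B, MeasurableSet B → P₁.real B ≤ P₂.real B + θ) :
    log (∫ y, exp (w y) ∂P₁) - log (∫ y, exp (w y) ∂P₂) ≤ bernoulliCGF θ K := by
  have hθ : 0 ≤ θ := by simpa using hP ∅ MeasurableSet.empty
  have hint : ∀ (P : Measure E) [IsFiniteMeasure P], Integrable (fun y => exp (w y)) P :=
    fun P _ => .of_bound hw.exp.aestronglyMeasurable (exp (m + K)) <| ae_of_all _ fun y => by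
      rw [norm_of_nonneg (exp_pos _).le]; exact exp_le_exp.2 (hhi y)
  set A := ∫ y, exp (w y) ∂P₁
  set A' := ∫ y, exp (w y) ∂P₂
  have hA' : exp m ≤ A' := by
    simpa using integral_mono (integrable_const (exp m)) (hint P₂) fun y => exp_le_exp.2 (hlo y)
  have hK' : 0 ≤ exp K - 1 := by linarith [one_le_exp hK]
  have hcompare : A - exp m ≤ A' - exp m + θ * (exp m * (exp K - 1)) := by
    have := integral_le_integral_add_mul_of_measureReal_le
      (h := fun y => exp (w y) - exp m) (hw.exp.sub measurable_const)
      (mul_nonneg (exp_pos m).le hK') (fun y => sub_nonneg.2 (exp_le_exp.2 (hlo y)))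
      (fun y => by rw [mul_sub, mul_one, ← exp_add]; linarith [exp_le_exp.2 (hhi y)]) hP
    rwa [integral_sub (hint P₁) (integrable_const _), integral_sub (hint P₂) (integrable_const _),
      integral_const, integral_const, probReal_univ, probReal_univ, one_smul] at this
  have hratio : A ≤ A' * (1 + θ * (exp K - 1)) := by
    nlinarith [mul_le_mul_of_nonneg_left hA' (mul_nonneg hθ hK')]
  have hA'pos : 0 < A' := (exp_pos m).trans_le hA'
  calc log A - log A' ≤ log (A' * (1 + θ * (exp K - 1))) - log A' := by
        gcongr
        exact integral_exp_pos (hint P₁)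
    _ = bernoulliCGF θ K := by
        rw [log_mul hA'pos.ne' (by nlinarith), bernoulliCGF]; ring

end Tilted

section RiskSensitiveOperator

variable {E : Type*} [MeasurableSpace E]

lemma PsiOp_sub_PsiOp (Q : Kernel E E) [IsMarkovKernel Q] (f : E → ℝ) (α : ℝ)
    {g₁ g₂ : E → ℝ} {x : E} (h₁ : Integrable (fun y => exp (α * g₁ y)) (Q x))
    (h₂ : Integrable (fun y => exp (α * g₂ y)) (Q x)) :
    PsiOp Q f α g₁ x - PsiOp Q f α g₂ x =
      1 / α * log (∫ y, exp (α * (g₁ y - g₂ y)) ∂(Q x).tilted fun y => α * g₂ y) := by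
  have hsum : (fun y => α * g₂ y) + (fun y => α * (g₁ y - g₂ y)) = fun y => α * g₁ y := by
    ext y; simp only [Pi.add_apply]; ring
  rw [integral_exp_tilted, hsum, log_div (integral_exp_pos h₁).ne' (integral_exp_pos h₂).ne',
    PsiOp, PsiOp]
  ring

lemma PsiOp_sub_sub_le (Q : Kernel E E) [IsMarkovKernel Q] (f : E → ℝ) {α : ℝ} (hα : α ≠ 0)
    {g₁ g₂ : E → ℝ} (hm₁ : Measurable g₁) (hm₂ : Measurable g₂) {C₁ C₂ M : ℝ}
    (hC₁ : ∀ y, |g₁ y| ≤ C₁) (hC₂ : ∀ y, |g₂ y| ≤ C₂) (hs₂ : spanSemi g₂ ≤ M) (x x' : E) :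
    (PsiOp Q f α g₁ x - PsiOp Q f α g₂ x) - (PsiOp Q f α g₁ x' - PsiOp Q f α g₂ x') ≤
      bernoulliCGF (1 - exp (-(|α| * M)) * (1 - doobCoeff Q))
        (|α| * spanSemi fun y => g₁ y - g₂ y) / |α| := by
  have : Nonempty E := ⟨x⟩
  set u := fun y => g₁ y - g₂ y
  set w := fun y => α * u y
  have hu : ∀ y, |u y| ≤ C₁ + C₂ := fun y => (abs_sub _ _).trans (add_le_add (hC₁ y) (hC₂ y))
  have hφ : ∀ y y', α * g₂ y - α * g₂ y' ≤ |α| * M := fun y y' =>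
    (mul_sub_mul_le_abs_mul_spanSemi hC₂ α y y').trans (by gcongr)
  have hw := mul_sub_mul_le_abs_mul_spanSemi hu α
  have hint : ∀ z, ∀ {g : E → ℝ} {C : ℝ}, Measurable g → (∀ y, |g y| ≤ C) →
      Integrable (fun y => exp (α * g y)) (Q z) := fun z _ _ hm hC =>
    integrable_exp_of_forall_sub_le (measurable_const.mul hm)
      (mul_sub_mul_le_abs_mul_spanSemi hC α) x
  have hmφ : Measurable fun y => α * g₂ y := measurable_const.mul hm₂
  have hlog : ∀ z z' : E, log (∫ y, exp (w y) ∂(Q z).tilted fun y => α * g₂ y) -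
      log (∫ y, exp (w y) ∂(Q z').tilted fun y => α * g₂ y) ≤
        bernoulliCGF (1 - exp (-(|α| * M)) * (1 - doobCoeff Q)) (|α| * spanSemi u) := by
    intro z z'
    have := isProbabilityMeasure_tilted (hint z hm₂ hC₂)
    have := isProbabilityMeasure_tilted (hint z' hm₂ hC₂)
    exact log_integral_exp_sub_le (measurable_const.mul (hm₁.sub hm₂))
      (mul_nonneg (abs_nonneg α) (spanSemi_nonneg hu))
      (fun y => ciInf_le (bddBelow_range_of_forall_sub_le hw x) y)
      (le_iInf_add_of_forall_sub_le hw)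
      (fun _ hB => tilted_measureReal_le_add Q hmφ hφ z z' hB)
  rw [PsiOp_sub_PsiOp Q f α (hint x hm₁ hC₁) (hint x hm₂ hC₂),
    PsiOp_sub_PsiOp Q f α (hint x' hm₁ hC₁) (hint x' hm₂ hC₂), ← mul_sub]
  calc _ ≤ |1 / α * _| := le_abs_self _
    _ ≤ _ := by
      rw [abs_mul, abs_div, abs_one, one_div_mul_eq_div]
      gcongr
      exact abs_sub_le_iff.2 ⟨hlog x x', hlog x' x⟩

end RiskSensitiveOperator

/-- The contraction constant on functions of span at most `M`: `T := 2 |α| M` bounds the span of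
`α (g₁ - g₂)`, and `1 - e^{-|α| M} (1 - Δ)` bounds the total variation between rows of the kernel
tilted by `α g₂`. -/
noncomputable def spanContractionCoeff (α M Δ : ℝ) : ℝ :=
  bernoulliCGF (1 - exp (-(|α| * M)) * (1 - Δ)) (2 * (|α| * M)) / (2 * (|α| * M))

section SpanContractionCoeff

variable {α M Δ : ℝ}

lemma one_sub_exp_neg_mul_mem_Ico {K : ℝ} (hK : 0 ≤ K) (hΔ₀ : 0 ≤ Δ) (hΔ₁ : Δ < 1) :
    1 - exp (-K) * (1 - Δ) ∈ Ico 0 1 := by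
  have hε : exp (-K) ≤ 1 := exp_le_one_iff.2 (neg_nonpos.2 hK)
  constructor <;> nlinarith [exp_pos (-K)]

lemma spanContractionCoeff_mem_Ico (hα : α ≠ 0) (hM : 0 < M) (hΔ₀ : 0 ≤ Δ) (hΔ₁ : Δ < 1) :
    spanContractionCoeff α M Δ ∈ Ico 0 1 := by
  have hT : 0 < 2 * (|α| * M) := by positivity
  obtain ⟨hθ₀, hθ₁⟩ := one_sub_exp_neg_mul_mem_Ico (by positivity : 0 ≤ |α| * M) hΔ₀ hΔ₁
  exact ⟨div_nonneg (bernoulliCGF_nonneg hθ₀ hT.le) hT.le,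
    (div_lt_one hT).2 (bernoulliCGF_lt_self hθ₀ hθ₁ hT)⟩

lemma bernoulliCGF_div_le_spanContractionCoeff_mul (hα : α ≠ 0) (hM : 0 < M) (hΔ₀ : 0 ≤ Δ)
    (hΔ₁ : Δ < 1) {S : ℝ} (hS₀ : 0 ≤ S) (hS : S ≤ 2 * M) :
    bernoulliCGF (1 - exp (-(|α| * M)) * (1 - Δ)) (|α| * S) / |α| ≤
      spanContractionCoeff α M Δ * S := by
  have hα' : 0 < |α| := abs_pos.2 hα
  obtain ⟨hθ₀, hθ₁⟩ := one_sub_exp_neg_mul_mem_Ico (by positivity : 0 ≤ |α| * M) hΔ₀ hΔ₁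
  have := bernoulliCGF_le_div_mul (t := |α| * S) hθ₀ hθ₁.le (by positivity) (by nlinarith)
    (by positivity : 0 < 2 * (|α| * M))
  calc _ ≤ |α| * S / (2 * (|α| * M)) * bernoulliCGF (1 - exp (-(|α| * M)) * (1 - Δ))
        (2 * (|α| * M)) / |α| := by gcongr
    _ = spanContractionCoeff α M Δ * S := by
        rw [spanContractionCoeff]; field_simp

end SpanContractionCoeff

theorem stmt5_general {E : Type*}
    [MeasurableSpace E]
    (Q : Kernel E E) [IsMarkovKernel Q]
    (hDoob : doobCoeff Q < 1)
    (f : E → ℝ)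
    (α : ℝ) (hα : α ≠ 0) :
    ∀ M : ℝ, 0 < M → ∃ γ : ℝ, 0 ≤ γ ∧ γ < 1 ∧
      ∀ g₁ g₂ : E → ℝ, Measurable g₁ → Measurable g₂ →
        (∃ C, ∀ x, |g₁ x| ≤ C) → (∃ C, ∀ x, |g₂ x| ≤ C) →
        spanSemi g₁ ≤ M → spanSemi g₂ ≤ M →
        spanSemi (fun x => PsiOp Q f α g₁ x - PsiOp Q f α g₂ x) ≤
          γ * spanSemi (fun x => g₁ x - g₂ x) := by
  intro M hM
  have hΔ₀ := doobCoeff_nonneg Q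
  obtain ⟨hγ₀, hγ₁⟩ := spanContractionCoeff_mem_Ico hα hM hΔ₀ hDoob
  refine ⟨_, hγ₀, hγ₁, fun g₁ g₂ hm₁ hm₂ ⟨C₁, hC₁⟩ ⟨C₂, hC₂⟩ _ hs₂ => ?_⟩
  rcases isEmpty_or_nonempty E with _ | _
  · simp [spanSemi]
  have hu : ∀ y, |g₁ y - g₂ y| ≤ C₁ + C₂ := fun y =>
    (abs_sub _ _).trans (add_le_add (hC₁ y) (hC₂ y))
  have hS : spanSemi (fun y => g₁ y - g₂ y) ≤ 2 * M := by
    linarith [spanSemi_sub_le hC₁ hC₂]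
  exact spanSemi_le_of_forall_sub_le fun x x' =>
    (PsiOp_sub_sub_le Q f hα hm₁ hm₂ hC₁ hC₂ hs₂ x x').trans
      (bernoulliCGF_div_le_spanContractionCoeff_mul hα hM hΔ₀ hDoob (spanSemi_nonneg hu) hS)

/-- Theorem 2, local contraction: under `Δ < 1`, `Ψ` is a local
contraction in the span seminorm on bounded Borel functions. -/
theorem stmt5 {E : Type*} [TopologicalSpace E] [PolishSpace E]
    [MeasurableSpace E] [BorelSpace E]
    (Q : Kernel E E) [IsMarkovKernel Q]
    (hDoob : doobCoeff Q < 1)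
    (f : E → ℝ) (hf : Measurable f) (hfb : ∃ C, ∀ x, |f x| ≤ C)
    (α : ℝ) (hα : α ≠ 0) :
    ∀ M : ℝ, 0 < M → ∃ γ : ℝ, 0 ≤ γ ∧ γ < 1 ∧
      ∀ g₁ g₂ : E → ℝ, Measurable g₁ → Measurable g₂ →
        (∃ C, ∀ x, |g₁ x| ≤ C) → (∃ C, ∀ x, |g₂ x| ≤ C) →
        spanSemi g₁ ≤ M → spanSemi g₂ ≤ M →
        spanSemi (fun x => PsiOp Q f α g₁ x - PsiOp Q f α g₂ x) ≤
          γ * spanSemi (fun x => g₁ x - g₂ x) :=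
  stmt5_general Q hDoob f α hα
end

section
/- Let E be a Polish space with Borel σ-algebra 𝓔, f : E → ℝ bounded Borel measurable, α ≠ 0, and K̃ < ∞. Let Q_1, Q_2 be Markov kernels on E with associated weighted operators (S_j h)(x) = e^{α f(x)} ∫_E h(y) Q_j(x,dy), j = 1, 2. Suppose λ_1, λ_2 ∈ ℝ and bounded Borel measurable w_1, w_2 with ‖w_1‖_sp ≤ K̃ and ‖w_2‖_sp ≤ K̃ satisfy α w_j(x) = α (f(x) − λ_j) + ln ∫_E e^{α w_j(y)} Q_j(x,dy) for all x ∈ E, j = 1, 2. Then for every positive integer k and every x ∈ E: k |λ_1 − λ_2| ≤ |(1/α) ln ( (S_1^k 1)(x) / (S_2^k 1)(x) )| + 2 K̃. -/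
open MeasureTheory ProbabilityTheory Filter
open scoped ENNReal

/-- Weighted (Feynman–Kac) operator `(S_{f,α} h)(x) = e^{α f(x)} ∫ h(y) Q(x,dy)`. -/
noncomputable def Sop {E : Type*} [MeasurableSpace E] (Q : Kernel E E)
    (f : E → ℝ) (α : ℝ) (h : E → ℝ) : E → ℝ :=
  fun x => Real.exp (α * f x) * ∫ y, h y ∂ (Q x)

/-! The Poisson equation says that `g = exp (α w)` is a positive eigenfunction of the weighted
operator `S`, with eigenvalue `exp (α λ)`, so `S^k g = exp (k α λ) g`. Since `‖w‖_sp ≤ K̃`,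
`g` lies between `g x * exp (-|α| K̃)` and `g x * exp (|α| K̃)`; as `S` is monotone on bounded
measurable functions and positively homogeneous, evaluating at `x` gives
`exp (k α λ - |α| K̃) ≤ S^k 1 x ≤ exp (k α λ + |α| K̃)`. Taking logarithms for both kernels and
subtracting yields the estimate. -/

theorem Real.abs_log_sub_le_of_mem_Icc {s b a : ℝ}
    (hs : s ∈ Set.Icc (Real.exp (b - a)) (Real.exp (b + a))) : |Real.log s - b| ≤ a := by
  have hpos : 0 < s := (Real.exp_pos _).trans_le hs.1
  have hlow := (Real.le_log_iff_exp_le hpos).2 hs.1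
  have hup := (Real.log_le_iff_le_exp hpos).2 hs.2
  exact abs_sub_le_iff.2 ⟨by linarith, by linarith⟩

theorem abs_sub_le_spanSemi {E : Type*} {w : E → ℝ} (hwb : ∃ C, ∀ x, |w x| ≤ C) (x y : E) :
    |w x - w y| ≤ spanSemi w := by
  obtain ⟨C, hC⟩ := hwb
  have hA : BddAbove (Set.range w) := ⟨C, by rintro _ ⟨z, rfl⟩; exact (abs_le.mp (hC z)).2⟩
  have hB : BddBelow (Set.range w) := ⟨-C, by rintro _ ⟨z, rfl⟩; exact (abs_le.mp (hC z)).1⟩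
  rw [spanSemi, abs_le]
  constructor <;> linarith [le_ciSup hA x, le_ciSup hA y, ciInf_le hB x, ciInf_le hB y]

def BoundedMeasurable {E : Type*} [MeasurableSpace E] (h : E → ℝ) : Prop :=
  Measurable h ∧ ∃ C, ∀ x, |h x| ≤ C

namespace BoundedMeasurable

variable {E : Type*} [MeasurableSpace E] {h : E → ℝ}

theorem const (c : ℝ) : BoundedMeasurable (fun _ : E => c) :=
  ⟨measurable_const, |c|, fun _ => le_rfl⟩

theorem integrable (hh : BoundedMeasurable h) (μ : Measure E) [IsFiniteMeasure μ] :
    Integrable h μ :=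
  let ⟨hm, C, hC⟩ := hh
  .of_bound hm.aestronglyMeasurable C (.of_forall hC)

theorem exp_const_mul (hh : BoundedMeasurable h) (a : ℝ) :
    BoundedMeasurable (fun x => Real.exp (a * h x)) := by
  obtain ⟨hm, C, hC⟩ := hh
  refine ⟨(hm.const_mul a).exp, Real.exp (|a| * C), fun x => ?_⟩
  rw [abs_of_pos (Real.exp_pos _), Real.exp_le_exp]
  calc a * h x ≤ |a| * |h x| := (le_abs_self _).trans (abs_mul _ _).le
    _ ≤ |a| * C := by gcongr; exact hC x

end BoundedMeasurable

namespace Sop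

variable {E : Type*} [MeasurableSpace E] (Q : Kernel E E) (f : E → ℝ) (α : ℝ)

theorem const_mul (c : ℝ) (h : E → ℝ) :
    Sop Q f α (fun y => c * h y) = fun x => c * Sop Q f α h x := by
  ext x
  simp only [Sop, integral_const_mul]
  ring

theorem iterate_const_mul (c : ℝ) (h : E → ℝ) (k : ℕ) :
    (Sop Q f α)^[k] (fun y => c * h y) = fun x => c * (Sop Q f α)^[k] h x := by
  induction k with
  | zero => rfl
  | succ k ih => simp only [Function.iterate_succ_apply', ih, const_mul]

theorem iterate_eq_pow_mul {g : E → ℝ} {c : ℝ} (hg : Sop Q f α g = fun x => c * g x) (k : ℕ) :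
    (Sop Q f α)^[k] g = fun x => c ^ k * g x := by
  induction k with
  | zero => simp
  | succ k ih =>
    rw [Function.iterate_succ_apply', ih, const_mul, hg]
    ext x
    ring

variable {f}

section

variable [IsFiniteKernel Q]

theorem boundedMeasurable (hf : Measurable f) (hfb : ∃ C, ∀ x, |f x| ≤ C) {h : E → ℝ}
    (hh : BoundedMeasurable h) : BoundedMeasurable (Sop Q f α h) := by
  obtain ⟨Cexp, hCexp⟩ := (BoundedMeasurable.exp_const_mul ⟨hf, hfb⟩ α).2
  obtain ⟨hm, C, hC⟩ := hh
  refine ⟨((hf.const_mul α).exp).mul (hm.stronglyMeasurable.integral_kernel (κ := Q)).measurable,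
    Cexp * (|C| * Q.bound.toReal), fun x => ?_⟩
  have hint : |∫ y, h y ∂Q x| ≤ |C| * Q.bound.toReal := by
    calc |∫ y, h y ∂Q x| ≤ |C| * (Q x).real Set.univ :=
          norm_integral_le_of_norm_le_const (f := h)
            (.of_forall fun y => (hC y).trans (le_abs_self C))
      _ ≤ |C| * Q.bound.toReal := by
          gcongr
          exact ENNReal.toReal_mono Q.bound_ne_top (Q.measure_le_bound x _)
  rw [Sop, abs_mul]
  exact mul_le_mul (hCexp x) hint (abs_nonneg _) ((abs_nonneg _).trans (hCexp x))

theorem mono {h₁ h₂ : E → ℝ} (hh₁ : BoundedMeasurable h₁) (hh₂ : BoundedMeasurable h₂)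
    (hle : h₁ ≤ h₂) : Sop Q f α h₁ ≤ Sop Q f α h₂ := fun _ =>
  mul_le_mul_of_nonneg_left
    (integral_mono (hh₁.integrable _) (hh₂.integrable _) hle) (Real.exp_pos _).le

theorem iterate_mono (hf : Measurable f) (hfb : ∃ C, ∀ x, |f x| ≤ C) {h₁ h₂ : E → ℝ}
    (hh₁ : BoundedMeasurable h₁) (hh₂ : BoundedMeasurable h₂) (hle : h₁ ≤ h₂) (k : ℕ) :
    (Sop Q f α)^[k] h₁ ≤ (Sop Q f α)^[k] h₂ := by
  induction k generalizing h₁ h₂ with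
  | zero => exact hle
  | succ k ih =>
    rw [Function.iterate_succ_apply, Function.iterate_succ_apply]
    exact ih (boundedMeasurable Q α hf hfb hh₁) (boundedMeasurable Q α hf hfb hh₂)
      (mono Q α hh₁ hh₂ hle)

theorem iterate_one_sandwich (hf : Measurable f)
    (hfb : ∃ C, ∀ x, |f x| ≤ C) {g : E → ℝ} (hg : BoundedMeasurable g) {c m M : ℝ}
    (heig : Sop Q f α g = fun x => c * g x) (hm : ∀ y, m ≤ g y) (hM : ∀ y, g y ≤ M)
    (k : ℕ) (x : E) :
    m * (Sop Q f α)^[k] (fun _ => 1) x ≤ c ^ k * g x ∧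
      c ^ k * g x ≤ M * (Sop Q f α)^[k] (fun _ => 1) x := by
  have hconst (b : ℝ) :
      (Sop Q f α)^[k] (fun _ => b) = fun x => b * (Sop Q f α)^[k] (fun _ => 1) x := by
    simpa using iterate_const_mul Q f α b (fun _ => 1) k
  have hgk := congrFun (iterate_eq_pow_mul Q f α heig k) x
  have hlow := iterate_mono Q α hf hfb (.const m) hg hm k x
  have hup := iterate_mono Q α hf hfb hg (.const M) hM k x
  rw [hconst, hgk] at hlow hup
  exact ⟨hlow, hup⟩

end

variable [IsMarkovKernel Q] {lam : ℝ} {w : E → ℝ}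

theorem apply_exp_of_poisson (hw : BoundedMeasurable w)
    (heq : ∀ x, α * w x = α * (f x - lam) + Real.log (∫ y, Real.exp (α * w y) ∂Q x)) :
    Sop Q f α (fun y => Real.exp (α * w y)) =
      fun x => Real.exp (α * lam) * Real.exp (α * w x) := by
  ext x
  have hI : 0 < ∫ y, Real.exp (α * w y) ∂Q x :=
    integral_exp_pos ((hw.exp_const_mul α).integrable _)
  rw [heq x, Real.exp_add, Real.exp_log hI, mul_sub, Real.exp_sub, Sop]
  field_simp

theorem iterate_one_mem_Icc_of_poisson (hf : Measurable f) (hfb : ∃ C, ∀ x, |f x| ≤ C)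
    {Kt : ℝ} (hw : BoundedMeasurable w) (hsp : spanSemi w ≤ Kt)
    (heq : ∀ x, α * w x = α * (f x - lam) + Real.log (∫ y, Real.exp (α * w y) ∂Q x))
    (k : ℕ) (x : E) :
    (Sop Q f α)^[k] (fun _ => 1) x ∈
      Set.Icc (Real.exp (k * (α * lam) - |α| * Kt)) (Real.exp (k * (α * lam) + |α| * Kt)) := by
  set g := fun y => Real.exp (α * w y)
  set a := |α| * Kt
  have hosc (y : E) : |α * w y - α * w x| ≤ a := by
    rw [← mul_sub, abs_mul]
    exact mul_le_mul_of_nonneg_left ((abs_sub_le_spanSemi hw.2 y x).trans hsp) (abs_nonneg α)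
  have hlow (y : E) : g x * Real.exp (-a) ≤ g y := by
    rw [← Real.exp_add, Real.exp_le_exp]
    linarith [(abs_le.mp (hosc y)).1]
  have hup (y : E) : g y ≤ g x * Real.exp a := by
    rw [← Real.exp_add, Real.exp_le_exp]
    linarith [(abs_le.mp (hosc y)).2]
  obtain ⟨h₁, h₂⟩ := iterate_one_sandwich Q α hf hfb (hw.exp_const_mul α)
    (apply_exp_of_poisson Q α hw heq) hlow hup k x
  rw [← Real.exp_nat_mul] at h₁ h₂
  have hgx : 0 < g x := Real.exp_pos _
  constructor
  · rw [Real.exp_sub, div_le_iff₀ (Real.exp_pos _)]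
    exact le_of_mul_le_mul_right (by linear_combination h₂) hgx
  · rw [← sub_neg_eq_add, Real.exp_sub, le_div_iff₀ (Real.exp_pos _)]
    exact le_of_mul_le_mul_right (by linear_combination h₁) hgx

end Sop

theorem stmt9_general {E : Type*} [MeasurableSpace E]
    (f : E → ℝ) (hf : Measurable f) (hfb : ∃ C, ∀ x, |f x| ≤ C)
    (α : ℝ) (hα : α ≠ 0) (Kt : ℝ)
    (Q₁ Q₂ : Kernel E E) [IsMarkovKernel Q₁] [IsMarkovKernel Q₂]
    (lam₁ lam₂ : ℝ) (w₁ w₂ : E → ℝ)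
    (hw₁ : Measurable w₁) (hw₂ : Measurable w₂)
    (hw₁b : ∃ C, ∀ x, |w₁ x| ≤ C) (hw₂b : ∃ C, ∀ x, |w₂ x| ≤ C)
    (hsp₁ : spanSemi w₁ ≤ Kt) (hsp₂ : spanSemi w₂ ≤ Kt)
    (heq₁ : ∀ x : E, α * w₁ x =
      α * (f x - lam₁) + Real.log (∫ y, Real.exp (α * w₁ y) ∂ (Q₁ x)))
    (heq₂ : ∀ x : E, α * w₂ x =
      α * (f x - lam₂) + Real.log (∫ y, Real.exp (α * w₂ y) ∂ (Q₂ x))) :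
    ∀ k : ℕ, 1 ≤ k → ∀ x : E,
      (k : ℝ) * |lam₁ - lam₂| ≤
        |(1 / α) * Real.log ((Sop Q₁ f α)^[k] (fun _ => 1) x /
          (Sop Q₂ f α)^[k] (fun _ => 1) x)| + 2 * Kt := by
  intro k _ x
  have h₁ := Sop.iterate_one_mem_Icc_of_poisson Q₁ α hf hfb ⟨hw₁, hw₁b⟩ hsp₁ heq₁ k x
  have h₂ := Sop.iterate_one_mem_Icc_of_poisson Q₂ α hf hfb ⟨hw₂, hw₂b⟩ hsp₂ heq₂ k x
  set A := (Sop Q₁ f α)^[k] (fun _ => 1) x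
  set B := (Sop Q₂ f α)^[k] (fun _ => 1) x
  have hA : 0 < A := (Real.exp_pos _).trans_le h₁.1
  have hB : 0 < B := (Real.exp_pos _).trans_le h₂.1
  have hlam : |k * (α * lam₁) - k * (α * lam₂)| = k * |lam₁ - lam₂| * |α| := by
    rw [← mul_sub, ← mul_sub, abs_mul, abs_mul, Nat.abs_cast]
    ring
  rw [Real.log_div hA.ne' hB.ne', abs_mul, one_div, abs_inv, ← div_eq_inv_mul,
    ← sub_le_iff_le_add, le_div_iff₀ (abs_pos.2 hα)]
  linarith [Real.abs_log_sub_le_of_mem_Icc h₁, Real.abs_log_sub_le_of_mem_Icc h₂,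
    abs_sub_le (k * (α * lam₁)) (Real.log A) (k * (α * lam₂)),
    abs_sub_le (Real.log A) (Real.log B) (k * (α * lam₂)),
    abs_sub_comm (k * (α * lam₁)) (Real.log A)]

/-- Corollary 2, second estimate: if `(λ_j, w_j)` solve the risk-sensitive
Poisson equations for kernels `Q_j`, `j = 1,2`, with `‖w_j‖_sp ≤ K̃`, then for all `k ≥ 1`
and `x`, `k |λ_1 − λ_2| ≤ |(1/α) ln ((S_1^k 1)(x) / (S_2^k 1)(x))| + 2 K̃`. -/
theorem stmt9 {E : Type*} [TopologicalSpace E] [PolishSpace E]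
    [MeasurableSpace E] [BorelSpace E]
    (f : E → ℝ) (hf : Measurable f) (hfb : ∃ C, ∀ x, |f x| ≤ C)
    (α : ℝ) (hα : α ≠ 0) (Kt : ℝ)
    (Q₁ Q₂ : Kernel E E) [IsMarkovKernel Q₁] [IsMarkovKernel Q₂]
    (lam₁ lam₂ : ℝ) (w₁ w₂ : E → ℝ)
    (hw₁ : Measurable w₁) (hw₂ : Measurable w₂)
    (hw₁b : ∃ C, ∀ x, |w₁ x| ≤ C) (hw₂b : ∃ C, ∀ x, |w₂ x| ≤ C)
    (hsp₁ : spanSemi w₁ ≤ Kt) (hsp₂ : spanSemi w₂ ≤ Kt)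
    (heq₁ : ∀ x : E, α * w₁ x =
      α * (f x - lam₁) + Real.log (∫ y, Real.exp (α * w₁ y) ∂ (Q₁ x)))
    (heq₂ : ∀ x : E, α * w₂ x =
      α * (f x - lam₂) + Real.log (∫ y, Real.exp (α * w₂ y) ∂ (Q₂ x))) :
    ∀ k : ℕ, 1 ≤ k → ∀ x : E,
      (k : ℝ) * |lam₁ - lam₂| ≤
        |(1 / α) * Real.log ((Sop Q₁ f α)^[k] (fun _ => 1) x /
          (Sop Q₂ f α)^[k] (fun _ => 1) x)| + 2 * Kt :=
  stmt9_general f hf hfb α hα Kt Q₁ Q₂ lam₁ lam₂ w₁ w₂ hw₁ hw₂ hw₁b hw₂b hsp₁ hsp₂ heq₁ heq₂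
end

section
/- Let E be a Polish space with Borel σ-algebra 𝓔, and let Q_n, Q be Markov kernels on E such that for every x ∈ E, sup_{B ∈ 𝓔} |Q_n(x,B) − Q(x,B)| → 0 as n → ∞. Fix r > 0 and an integer k ≥ 1. (i) If for each i ∈ {0,…,k−1}, f_i^n, f_i : E → ℝ are Borel measurable with sup_{y∈E} |f_i^n(y)| ≤ r and f_i^n(y) → f_i(y) for every y ∈ E, then defining g^n and g by the backward recursions g^n_{k−1}(y) = e^{f^n_{k−1}(y)}, g^n_i(y) = e^{f^n_i(y)} ∫_E g^n_{i+1}(z) Q_n(y,dz), and g_{k−1}(y) = e^{f_{k−1}(y)}, g_i(y) = e^{f_i(y)} ∫_E g_{i+1}(z) Q(y,dz), one has g^n_0(x) → g_0(x) as n → ∞ for every x ∈ E. (ii) Consequently, for every α ≠ 0, every k > 1 and every x ∈ E, sup_{B ∈ 𝓔} | ln ((S^{(n)}_{1_B,α})^k 1)(x) − ln ((S_{1_B,α})^k 1)(x) | → 0 as n → ∞, where S^{(n)}_{1_B,α} and S_{1_B,α} are the weighted operators for Q_n and Q with weight function 1_B. -/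
open MeasureTheory ProbabilityTheory Filter
open scoped ENNReal

/-- The backward recursion of the paper: `chainExp Q fs k x = E_x[e^{Σ_{i<k} fs i (X_i)}]`,
i.e. `g_0` of the recursion `g_{k−1} = e^{f_{k−1}}`, `g_i(y) = e^{f_i(y)} ∫ g_{i+1} dQ(y,·)`. -/
noncomputable def chainExp {E : Type*} [MeasurableSpace E] (Q : Kernel E E) :
    (ℕ → E → ℝ) → ℕ → E → ℝ
  | _, 0 => fun _ => 1
  | fs, j + 1 => fun y =>
      Real.exp (fs 0 y) * ∫ z, chainExp Q (fun i => fs (i + 1)) j z ∂ (Q y)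

/-!
Everything rests on the estimate `|∫ h dμ - ∫ h dν| ≤ 2 M tvDist μ ν` for measurable `|h| ≤ M`,
proved by writing both integrals against densities with respect to `μ + ν`.
Peeling off the first step of the recursion, `chainExp P fs (j+1) - chainExp Q gs (j+1)` splits
into a term controlled by `e^{fs 0} - e^{gs 0}`, a term controlled by `tvDist (P y) (Q y)`, and the
`Q(y, ·)`-integral of the difference at depth `j`, which vanishes by dominated convergence.
This induction only needs the two weight families to merge, not to converge, so it applies to
the weights `α 1_{B_n}` along any sequence of Borel sets `B_n`; since a supremum is approached
along such a sequence, this gives uniformity in `B`. The logarithms are harmless because a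
recursion with weights bounded by `c` stays above `e^{-jc}`.
-/

open scoped Topology

section TotalVariation

variable {E : Type*} [MeasurableSpace E]

lemma abs_toReal_measure_sub_le_tvDist {μ ν : Measure E} [IsProbabilityMeasure μ]
    [IsProbabilityMeasure ν] {B : Set E} (hB : MeasurableSet B) :
    |(μ B).toReal - (ν B).toReal| ≤ tvDist μ ν := by
  refine le_ciSup (f := fun B : {B : Set E // MeasurableSet B} =>
    |(μ B.1).toReal - (ν B.1).toReal|) ⟨1, ?_⟩ ⟨B, hB⟩
  rintro _ ⟨B, rfl⟩
  exact abs_sub_le_of_nonneg_of_le ENNReal.toReal_nonneg measureReal_le_one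
    ENNReal.toReal_nonneg measureReal_le_one

lemma integral_abs_rnDeriv_sub_rnDeriv_le (μ ν : Measure E) [IsProbabilityMeasure μ]
    [IsProbabilityMeasure ν] :
    ∫ y, |(μ.rnDeriv (μ + ν) y).toReal - (ν.rnDeriv (μ + ν) y).toReal| ∂(μ + ν) ≤
      2 * tvDist μ ν := by
  set f := fun y => (μ.rnDeriv (μ + ν) y).toReal
  set g := fun y => (ν.rnDeriv (μ + ν) y).toReal
  have hf : Integrable f (μ + ν) := Measure.integrable_toReal_rnDeriv
  have hg : Integrable g (μ + ν) := Measure.integrable_toReal_rnDeriv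
  have hμ (s : Set E) : ∫ y in s, f y ∂(μ + ν) = (μ s).toReal :=
    Measure.setIntegral_toReal_rnDeriv (Measure.AbsolutelyContinuous.rfl.add_right ν) s
  have hν (s : Set E) : ∫ y in s, g y ∂(μ + ν) = (ν s).toReal :=
    Measure.setIntegral_toReal_rnDeriv (Measure.AbsolutelyContinuous.rfl.add_right' μ) s
  set A := {y | g y < f y}
  have hA : MeasurableSet A :=
    measurableSet_lt (Measure.measurable_rnDeriv ν _).ennreal_toReal
      (Measure.measurable_rnDeriv μ _).ennreal_toReal
  have hpos : ∫ y in A, |f y - g y| ∂(μ + ν) = (μ A).toReal - (ν A).toReal := by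
    rw [setIntegral_congr_fun hA fun y (hy : g y < f y) => abs_of_pos (sub_pos.2 hy),
      integral_sub hf.integrableOn hg.integrableOn, hμ, hν]
  have hneg : ∫ y in Aᶜ, |f y - g y| ∂(μ + ν) = (ν Aᶜ).toReal - (μ Aᶜ).toReal := by
    rw [setIntegral_congr_fun hA.compl fun y (hy : ¬ g y < f y) =>
        (abs_of_nonpos (sub_nonpos.2 (not_lt.1 hy))).trans (neg_sub _ _),
      integral_sub hg.integrableOn hf.integrableOn, hμ, hν]
  change ∫ y, |f y - g y| ∂(μ + ν) ≤ _
  rw [← integral_add_compl (f := fun y => |f y - g y|) hA (hf.sub hg).abs, hpos, hneg]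
  have h₁ := (le_abs_self _).trans (abs_toReal_measure_sub_le_tvDist (μ := μ) (ν := ν) hA)
  have h₂ := (neg_le_abs _).trans (abs_toReal_measure_sub_le_tvDist (μ := μ) (ν := ν) hA.compl)
  linarith

lemma abs_integral_sub_integral_le_tvDist (μ ν : Measure E) [IsProbabilityMeasure μ]
    [IsProbabilityMeasure ν] {h : E → ℝ} (hm : Measurable h) {M : ℝ} (hb : ∀ y, |h y| ≤ M) :
    |∫ y, h y ∂μ - ∫ y, h y ∂ν| ≤ 2 * M * tvDist μ ν := by
  have : Nonempty E := nonempty_of_isProbabilityMeasure μ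
  have hM : 0 ≤ M := (abs_nonneg _).trans (hb (Classical.arbitrary E))
  set d := fun y => (μ.rnDeriv (μ + ν) y).toReal - (ν.rnDeriv (μ + ν) y).toReal
  have hd : Integrable d (μ + ν) :=
    Measure.integrable_toReal_rnDeriv.sub Measure.integrable_toReal_rnDeriv
  have hbd : ∀ᵐ y ∂(μ + ν), ‖h y‖ ≤ M := ae_of_all _ hb
  have hdensity : ∫ y, h y ∂μ - ∫ y, h y ∂ν = ∫ y, h y * d y ∂(μ + ν) := by
    rw [← integral_rnDeriv_smul (f := h) (Measure.AbsolutelyContinuous.rfl.add_right ν),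
      ← integral_rnDeriv_smul (f := h) (Measure.AbsolutelyContinuous.rfl.add_right' μ),
      ← integral_sub]
    · simp only [d, smul_eq_mul, mul_sub, mul_comm]
    all_goals simpa only [smul_eq_mul, mul_comm] using
      Measure.integrable_toReal_rnDeriv.bdd_mul hm.aestronglyMeasurable hbd
  calc |∫ y, h y ∂μ - ∫ y, h y ∂ν| = |∫ y, h y * d y ∂(μ + ν)| := by rw [hdensity]
    _ ≤ ∫ y, M * |d y| ∂(μ + ν) := by
        refine abs_integral_le_integral_abs.trans <| integral_mono
          (hd.bdd_mul hm.aestronglyMeasurable hbd).abs (hd.abs.const_mul M) fun y => ?_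
        rw [abs_mul]
        exact mul_le_mul_of_nonneg_right (hb y) (abs_nonneg _)
    _ = M * ∫ y, |d y| ∂(μ + ν) := integral_const_mul M _
    _ ≤ M * (2 * tvDist μ ν) :=
        mul_le_mul_of_nonneg_left (integral_abs_rnDeriv_sub_rnDeriv_le μ ν) hM
    _ = 2 * M * tvDist μ ν := by ring

lemma tendsto_integral_sub_integral_of_tvDist {μ : ℕ → Measure E} {ν : Measure E}
    [∀ n, IsProbabilityMeasure (μ n)] [IsProbabilityMeasure ν]
    (hμ : Tendsto (fun n => tvDist (μ n) ν) atTop (𝓝 0)) {h : ℕ → E → ℝ}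
    (hm : ∀ n, Measurable (h n)) {M : ℝ} (hb : ∀ n y, |h n y| ≤ M) :
    Tendsto (fun n => ∫ y, h n y ∂(μ n) - ∫ y, h n y ∂ν) atTop (𝓝 0) :=
  squeeze_zero_norm (fun n => abs_integral_sub_integral_le_tvDist _ _ (hm n) (hb n))
    (by simpa using hμ.const_mul (2 * M))

end TotalVariation

lemma tendsto_exp_sub_exp {ι : Type*} {l : Filter ι} {a b : ι → ℝ} {r : ℝ}
    (hb : ∀ n, |b n| ≤ r) (hab : Tendsto (fun n => a n - b n) l (𝓝 0)) :
    Tendsto (fun n => Real.exp (a n) - Real.exp (b n)) l (𝓝 0) := by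
  have hbdd : IsBoundedUnder (· ≤ ·) l (norm ∘ fun n => Real.exp (b n)) :=
    isBoundedUnder_of ⟨Real.exp r, fun n => by
      simpa using Real.exp_le_exp.2 (le_of_abs_le (hb n))⟩
  have hlim : Tendsto (fun n => Real.exp (a n - b n) - 1) l (𝓝 0) := by
    simpa using ((Real.continuous_exp.tendsto 0).comp hab).sub_const 1
  refine (isBoundedUnder_le_mul_tendsto_zero hbdd hlim).congr fun n => ?_
  rw [mul_sub, ← Real.exp_add, add_sub_cancel, mul_one]

section ChainExp

variable {E : Type*} [MeasurableSpace E]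

lemma measurable_chainExp (Q : Kernel E E) [IsSFiniteKernel Q] :
    ∀ (j : ℕ) (fs : ℕ → E → ℝ), (∀ i, i < j → Measurable (fs i)) →
      Measurable (chainExp Q fs j)
  | 0, _, _ => measurable_const
  | j + 1, _, hm =>
    (Real.measurable_exp.comp (hm 0 j.succ_pos)).mul <|
      ((measurable_chainExp Q j _ fun i hi => hm (i + 1) (Nat.succ_lt_succ hi))
        |>.stronglyMeasurable.comp_measurable measurable_snd).integral_kernel_prod_right'.measurable

lemma chainExp_mem_Icc (Q : Kernel E E) [IsMarkovKernel Q] {c : ℝ} :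
    ∀ (j : ℕ) (fs : ℕ → E → ℝ), (∀ i, i < j → Measurable (fs i)) →
      (∀ i, i < j → ∀ y, |fs i y| ≤ c) →
      ∀ y, chainExp Q fs j y ∈ Set.Icc (Real.exp (-(j * c))) (Real.exp (j * c))
  | 0, _, _, _, _ => by simp [chainExp]
  | j + 1, fs, hm, hb, y => by
    have ih := chainExp_mem_Icc Q j (fun i => fs (i + 1))
      (fun i hi => hm (i + 1) (Nat.succ_lt_succ hi)) (fun i hi => hb (i + 1) (Nat.succ_lt_succ hi))
    have hint : ∫ z, chainExp Q (fun i => fs (i + 1)) j z ∂(Q y) ∈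
        Set.Icc (Real.exp (-(j * c))) (Real.exp (j * c)) :=
      (convex_Icc _ _).integral_mem isClosed_Icc (ae_of_all _ ih) <|
        Integrable.of_mem_Icc _ _
          (measurable_chainExp Q j _ fun i hi => hm (i + 1) (Nat.succ_lt_succ hi)).aemeasurable
          (ae_of_all _ ih)
    have hexp := abs_le.1 (hb 0 j.succ_pos y)
    push_cast
    rw [show -((j + 1) * c) = -c + -(j * c) by ring, show (j + 1) * c = c + j * c by ring,
      Real.exp_add, Real.exp_add]
    exact ⟨mul_le_mul (Real.exp_le_exp.2 hexp.1) hint.1 (Real.exp_pos _).le (Real.exp_pos _).le,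
      mul_le_mul (Real.exp_le_exp.2 hexp.2) hint.2 ((Real.exp_pos _).le.trans hint.1)
        (Real.exp_pos _).le⟩

lemma abs_chainExp_le (Q : Kernel E E) [IsMarkovKernel Q] {c : ℝ} (j : ℕ) (fs : ℕ → E → ℝ)
    (hm : ∀ i, i < j → Measurable (fs i)) (hb : ∀ i, i < j → ∀ y, |fs i y| ≤ c) (y : E) :
    |chainExp Q fs j y| ≤ Real.exp (j * c) :=
  have h := chainExp_mem_Icc Q j fs hm hb y
  abs_le.2 ⟨(neg_nonpos.2 (Real.exp_pos _).le).trans ((Real.exp_pos _).le.trans h.1), h.2⟩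

lemma tendsto_exp_mul_integral_sub_exp_mul_integral {μ : ℕ → Measure E} {ν : Measure E}
    [∀ n, IsProbabilityMeasure (μ n)] [IsProbabilityMeasure ν]
    (hμ : Tendsto (fun n => tvDist (μ n) ν) atTop (𝓝 0)) {a b : ℕ → ℝ} {r : ℝ}
    (hb : ∀ n, |b n| ≤ r) (hab : Tendsto (fun n => a n - b n) atTop (𝓝 0)) {F G : ℕ → E → ℝ}
    (hFm : ∀ n, Measurable (F n)) (hGm : ∀ n, Measurable (G n)) {M : ℝ}
    (hFb : ∀ n z, |F n z| ≤ M) (hGb : ∀ n z, |G n z| ≤ M)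
    (hFG : ∀ z, Tendsto (fun n => F n z - G n z) atTop (𝓝 0)) :
    Tendsto (fun n => Real.exp (a n) * ∫ z, F n z ∂(μ n) - Real.exp (b n) * ∫ z, G n z ∂ν)
      atTop (𝓝 0) := by
  have hmeasure := tendsto_integral_sub_integral_of_tvDist hμ hFm hFb
  have hdom : Tendsto (fun n => ∫ z, (F n z - G n z) ∂ν) atTop (𝓝 0) := by
    simpa using tendsto_integral_of_dominated_convergence (fun _ => 2 * M)
      (fun n => ((hFm n).sub (hGm n)).aestronglyMeasurable) (integrable_const _)
      (fun n => ae_of_all _ fun z => (abs_sub _ _).trans (by linarith [hFb n z, hGb n z]))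
      (ae_of_all _ hFG)
  have hint : Tendsto (fun n => ∫ z, F n z ∂(μ n) - ∫ z, G n z ∂ν) atTop (𝓝 0) := by
    rw [← add_zero 0]
    refine Tendsto.congr (fun n => ?_) (hmeasure.add hdom)
    rw [integral_sub (Integrable.of_bound (hFm n).aestronglyMeasurable _ (ae_of_all _ (hFb n)))
      (Integrable.of_bound (hGm n).aestronglyMeasurable _ (ae_of_all _ (hGb n)))]
    ring
  have hIbdd : IsBoundedUnder (· ≤ ·) atTop (norm ∘ fun n => ∫ z, F n z ∂(μ n)) :=
    isBoundedUnder_of ⟨M, fun n => by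
      simpa using norm_integral_le_of_norm_le_const (μ := μ n) (f := F n) (ae_of_all _ (hFb n))⟩
  have hexpbdd : IsBoundedUnder (· ≤ ·) atTop (norm ∘ fun n => Real.exp (b n)) :=
    isBoundedUnder_of ⟨Real.exp r, fun n => by simpa using Real.exp_le_exp.2 (le_of_abs_le (hb n))⟩
  rw [← add_zero 0]
  refine Tendsto.congr (fun n => by ring) (((tendsto_exp_sub_exp hb hab).zero_mul_isBoundedUnder_le
    hIbdd).add (isBoundedUnder_le_mul_tendsto_zero hexpbdd hint))

theorem tendsto_chainExp_sub_chainExp {P : ℕ → Kernel E E} {Q : Kernel E E}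
    [∀ n, IsMarkovKernel (P n)] [IsMarkovKernel Q]
    (htv : ∀ y, Tendsto (fun n => tvDist (P n y) (Q y)) atTop (𝓝 0)) {r : ℝ} :
    ∀ (j : ℕ) (fs gs : ℕ → ℕ → E → ℝ),
      (∀ n i, i < j → Measurable (fs n i)) → (∀ n i, i < j → Measurable (gs n i)) →
      (∀ n i, i < j → ∀ y, |fs n i y| ≤ r) → (∀ n i, i < j → ∀ y, |gs n i y| ≤ r) →
      (∀ i, i < j → ∀ y, Tendsto (fun n => fs n i y - gs n i y) atTop (𝓝 0)) →
      ∀ y, Tendsto (fun n => chainExp (P n) (fs n) j y - chainExp Q (gs n) j y) atTop (𝓝 0)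
  | 0, _, _, _, _, _, _, _, _ => by simp [chainExp]
  | j + 1, fs, gs, hfm, hgm, hfb, hgb, hfg, y => by
    have tail {p : ℕ → Prop} (h : ∀ i, i < j + 1 → p i) i (hi : i < j) : p (i + 1) :=
      h (i + 1) (Nat.succ_lt_succ hi)
    exact tendsto_exp_mul_integral_sub_exp_mul_integral (htv y) (fun n => hgb n 0 j.succ_pos y)
      (hfg 0 j.succ_pos y)
      (fun n => measurable_chainExp _ j _ (tail (hfm n)))
      (fun n => measurable_chainExp _ j _ (tail (hgm n)))
      (fun n => abs_chainExp_le _ j _ (tail (hfm n)) (tail (hfb n)))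
      (fun n => abs_chainExp_le _ j _ (tail (hgm n)) (tail (hgb n)))
      (tendsto_chainExp_sub_chainExp htv j _ _ (fun n => tail (hfm n)) (fun n => tail (hgm n))
        (fun n => tail (hfb n)) (fun n => tail (hgb n)) (tail hfg))

lemma Sop_iterate_one_eq_chainExp (Q : Kernel E E) (f : E → ℝ) (α : ℝ) :
    ∀ m, (Sop Q f α)^[m] (fun _ => 1) = chainExp Q (fun _ y => α * f y) m
  | 0 => rfl
  | m + 1 => by
    rw [Function.iterate_succ_apply', Sop_iterate_one_eq_chainExp Q f α m]
    rfl

end ChainExp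

lemma tendsto_iSup_of_forall_tendsto_comp {ι : Type*} {F : ℕ → ι → ℝ} (hF : ∀ n i, 0 ≤ F n i)
    (h : ∀ b : ℕ → ι, Tendsto (fun n => F n (b n)) atTop (𝓝 0)) :
    Tendsto (fun n => ⨆ i, F n i) atTop (𝓝 0) := by
  cases isEmpty_or_nonempty ι
  · simp
  have hnear n : ∃ i, ⨆ i, F n i ≤ F n i + 1 / ((n : ℝ) + 1) := by
    by_cases hbdd : BddAbove (Set.range (F n))
    · obtain ⟨i, hi⟩ := exists_lt_of_lt_ciSup (sub_lt_self (⨆ i, F n i) (Nat.one_div_pos_of_nat))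
      exact ⟨i, (sub_lt_iff_lt_add.1 hi).le⟩
    · refine ⟨Classical.arbitrary ι, ?_⟩
      rw [Real.iSup_of_not_bddAbove hbdd]
      exact add_nonneg (hF _ _) Nat.one_div_pos_of_nat.le
  choose b hb using hnear
  exact squeeze_zero (fun n => Real.iSup_nonneg (hF n)) hb
    (by simpa using (h b).add tendsto_one_div_add_atTop_nhds_zero_nat)

lemma abs_log_sub_log_le {a b ε : ℝ} (hε : 0 < ε) (ha : ε ≤ a) (hb : ε ≤ b) :
    |Real.log a - Real.log b| ≤ |a - b| / ε := by
  wlog hba : b ≤ a generalizing a b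
  · rw [abs_sub_comm, abs_sub_comm a]
    exact this hb ha (le_of_not_ge hba)
  have hb0 : 0 < b := hε.trans_le hb
  rw [abs_of_nonneg (sub_nonneg.2 (Real.log_le_log hb0 hba)), abs_of_nonneg (sub_nonneg.2 hba),
    ← Real.log_div (hb0.trans_le hba).ne' hb0.ne']
  calc Real.log (a / b) ≤ a / b - 1 := Real.log_le_sub_one_of_pos (div_pos (hb0.trans_le hba) hb0)
    _ = (a - b) / b := by field_simp
    _ ≤ (a - b) / ε := div_le_div_of_nonneg_left (sub_nonneg.2 hba) hε hb

lemma tendsto_abs_log_sub_log {a b : ℕ → ℝ} {ε : ℝ} (hε : 0 < ε) (ha : ∀ n, ε ≤ a n)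
    (hb : ∀ n, ε ≤ b n) (hab : Tendsto (fun n => a n - b n) atTop (𝓝 0)) :
    Tendsto (fun n => |Real.log (a n) - Real.log (b n)|) atTop (𝓝 0) :=
  squeeze_zero (fun _ => abs_nonneg _) (fun n => abs_log_sub_log_le hε (ha n) (hb n))
    (by simpa using hab.abs.div_const ε)

theorem stmt10_general {E : Type*} [MeasurableSpace E]
    (Qn : ℕ → Kernel E E) (Q : Kernel E E)
    [∀ n, IsMarkovKernel (Qn n)] [IsMarkovKernel Q]
    (htv : ∀ x, Tendsto (fun n => tvDist (Qn n x) (Q x)) atTop (nhds 0))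
    (r : ℝ) (k : ℕ) :
    (∀ (fsn : ℕ → ℕ → E → ℝ) (fs : ℕ → E → ℝ),
      (∀ n i, i < k → Measurable (fsn n i)) →
      (∀ i, i < k → Measurable (fs i)) →
      (∀ n i, i < k → ∀ y, |fsn n i y| ≤ r) →
      (∀ i, i < k → ∀ y, Tendsto (fun n => fsn n i y) atTop (nhds (fs i y))) →
      ∀ x : E, Tendsto (fun n => chainExp (Qn n) (fsn n) k x) atTop
        (nhds (chainExp Q fs k x))) ∧
    (∀ α : ℝ, α ≠ 0 → 1 < k → ∀ x : E,
      Tendsto (fun n => ⨆ B : {B : Set E // MeasurableSet B},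
        |Real.log ((Sop (Qn n) (B.1.indicator 1) α)^[k] (fun _ => 1) x) -
          Real.log ((Sop Q (B.1.indicator 1) α)^[k] (fun _ => 1) x)|)
        atTop (nhds 0)) := by
  refine ⟨fun fsn fs hmn hm hbn hconv x => ?_, fun α _ _ x => ?_⟩
  · have hb i (hi : i < k) y : |fs i y| ≤ r :=
      le_of_tendsto' (hconv i hi y).abs fun n => hbn n i hi y
    exact tendsto_sub_nhds_zero_iff.1 <| tendsto_chainExp_sub_chainExp htv k fsn (fun _ => fs)
      hmn (fun _ => hm) hbn (fun _ => hb)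
      (fun i hi y => tendsto_sub_nhds_zero_iff.2 (hconv i hi y)) x
  · refine tendsto_iSup_of_forall_tendsto_comp (fun _ _ => abs_nonneg _) fun B => ?_
    simp only [Sop_iterate_one_eq_chainExp]
    set fs : ℕ → ℕ → E → ℝ := fun n _ y => α * (B n).1.indicator 1 y
    have hm n i (_ : i < k) : Measurable (fs n i) :=
      measurable_const.mul (measurable_const.indicator (B n).2)
    have hb n i (_ : i < k) y : |fs n i y| ≤ |α| := by
      by_cases hy : y ∈ (B n).1 <;> simp [fs, hy]
    have hlow P [IsMarkovKernel P] n : Real.exp (-(k * |α|)) ≤ chainExp P (fs n) k x :=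
      (chainExp_mem_Icc P k _ (hm n) (hb n) x).1
    exact tendsto_abs_log_sub_log (Real.exp_pos _) (fun n => hlow (Qn n) n) (fun n => hlow Q n)
      (tendsto_chainExp_sub_chainExp htv k fs fs hm hm hb hb (fun _ _ _ => by simp) x)

/-- Proposition 3: (i) convergence of the backward recursions under
total variation convergence of the kernels and pointwise convergence of uniformly
bounded weights; (ii) consequently, uniform (in the Borel set `B`) convergence of the
logarithms of `((S_{1_B,α})^k 1)(x)`. -/
theorem stmt10 {E : Type*} [TopologicalSpace E] [PolishSpace E]
    [MeasurableSpace E] [BorelSpace E]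
    (Qn : ℕ → Kernel E E) (Q : Kernel E E)
    [∀ n, IsMarkovKernel (Qn n)] [IsMarkovKernel Q]
    (htv : ∀ x, Tendsto (fun n => tvDist (Qn n x) (Q x)) atTop (nhds 0))
    (r : ℝ) (hr : 0 < r) (k : ℕ) (hk : 1 ≤ k) :
    (∀ (fsn : ℕ → ℕ → E → ℝ) (fs : ℕ → E → ℝ),
      (∀ n i, i < k → Measurable (fsn n i)) →
      (∀ i, i < k → Measurable (fs i)) →
      (∀ n i, i < k → ∀ y, |fsn n i y| ≤ r) →
      (∀ i, i < k → ∀ y, Tendsto (fun n => fsn n i y) atTop (nhds (fs i y))) →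
      ∀ x : E, Tendsto (fun n => chainExp (Qn n) (fsn n) k x) atTop
        (nhds (chainExp Q fs k x))) ∧
    (∀ α : ℝ, α ≠ 0 → 1 < k → ∀ x : E,
      Tendsto (fun n => ⨆ B : {B : Set E // MeasurableSet B},
        |Real.log ((Sop (Qn n) (B.1.indicator 1) α)^[k] (fun _ => 1) x) -
          Real.log ((Sop Q (B.1.indicator 1) α)^[k] (fun _ => 1) x)|)
        atTop (nhds 0)) :=
  stmt10_general Qn Q htv r k
end
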